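/- Work in dimension d = 1. Let n ≥ 2 and let a_1 < b_1 < a_2 < b_2 < … < a_n < b_n be real numbers, so that the segments [a_k, b_k] are pairwise disjoint and ordered from left to right. Let μ_k denote the uniform probability measure on [a_k, b_k] and Q_n = (1/n)·Σ_{i=1}^n μ_i. Then the curve depth of the k-th segment, D_k = ∫ D(x | Q_n, μ_k) dμ_k(x), equals 1/n if k = 1 or k = n, and equals 1/n − ((n−1)/n)·log((1−t_k)^{1−t_k} · t_k^{t_k}) with t_k = (k−1)/(n−1) if 1 < k < n, where log is the natural logarithm. In particular D_k depends only on n and k, not on the positions or lengths of the segments. (Segments-on-a-line example of Section 5.1 of the paper.) -/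

import Mathlib

/-!
A point `x = a_k + t (b_k - a_k)` of the `k`-th segment splits `μ_k` into masses `t` and `1 - t`,
and, since every other segment lies entirely on one side of `x`, splits `Q_n` into
`(k - 1 + t) / n` and `(n - k + 1 - t) / n`. Hence the point depth is
`(1 + min ((k - 1) / t, (n - k) / (1 - t))) / n`, whatever the positions and lengths of the
segments, and the curve depth is its integral over `t ∈ (0, 1)`. The minimum changes branch at
`t = t_k`, and the two pieces integrate to `-(n - k) log (1 - t_k)` and `-(k - 1) log t_k`.
-/

open MeasureTheory Set Filter
open scoped ENNReal

noncomputable section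

/-- Point curve depth in dimension `d = 1`: the unit sphere is `{−1, 1}` and the
closed halfspaces through `x` are the rays `(−∞, x]` and `[x, ∞)`.  The `ℝ≥0∞`
division conventions `a/0 = ∞` for `a > 0` and `0/0 = 0` are in force. -/
def pointDepth1 (Q μ : Measure ℝ) (x : ℝ) : ℝ≥0∞ :=
  min (Q (Set.Iic x) / μ (Set.Iic x)) (Q (Set.Ici x) / μ (Set.Ici x))

/-- The uniform probability measure on `[a, b]` (normalized Lebesgue measure),
which is the arc-length measure of the segment `[a, b]` viewed as a curve. -/
def unif (a b : ℝ) : Measure ℝ :=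
  (ENNReal.ofReal (b - a))⁻¹ • volume.restrict (Set.Icc a b)

namespace Finset

theorem sum_Icc_eq_sum_Ico_add_add_sum_Ioc {M : Type*} [AddCommMonoid M] (f : ℕ → M)
    {m k n : ℕ} (hmk : m ≤ k) (hkn : k ≤ n) :
    ∑ i ∈ Icc m n, f i = ∑ i ∈ Ico m k, f i + f k + ∑ i ∈ Ioc k n, f i := by
  rw [← Ico_add_one_right_eq_Icc, ← sum_Ico_consecutive f hmk (by omega : k ≤ n + 1),
    sum_eq_sum_Ico_succ_bot (by omega : k < n + 1), Ico_add_one_add_one_eq_Ioc, add_assoc]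

end Finset

theorem ENNReal.ofReal_inv_mul_ofReal_mul {c : ℝ} (hc : 0 < c) (t : ℝ) :
    (ENNReal.ofReal c)⁻¹ * ENNReal.ofReal (c * t) = ENNReal.ofReal t := by
  rw [ENNReal.ofReal_mul hc.le, ← mul_assoc,
    ENNReal.inv_mul_cancel (ENNReal.ofReal_pos.2 hc).ne' ENNReal.ofReal_ne_top, one_mul]

theorem unif_apply (a b : ℝ) (s : Set ℝ) :
    unif a b s = (ENNReal.ofReal (b - a))⁻¹ * volume (s ∩ Icc a b) := by
  rw [unif, Measure.smul_apply, smul_eq_mul, Measure.restrict_apply' measurableSet_Icc]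

theorem unif_eq_zero_of_disjoint {a b : ℝ} {s : Set ℝ} (h : Disjoint s (Icc a b)) :
    unif a b s = 0 := by
  rw [unif_apply, h.inter_eq, measure_empty, mul_zero]

theorem unif_eq_one_of_Icc_subset {a b : ℝ} {s : Set ℝ} (hab : a < b) (h : Icc a b ⊆ s) :
    unif a b s = 1 := by
  rw [unif_apply, inter_eq_right.2 h, Real.volume_Icc]
  exact ENNReal.inv_mul_cancel (ENNReal.ofReal_pos.2 (sub_pos.2 hab)).ne' ENNReal.ofReal_ne_top

theorem unif_Iic_affine {a b t : ℝ} (hab : a < b) (ht : t ∈ Icc (0 : ℝ) 1) :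
    unif a b (Iic ((b - a) * t + a)) = ENNReal.ofReal t := by
  have hx : (b - a) * t + a ≤ b := by nlinarith [ht.2]
  have : Iic ((b - a) * t + a) ∩ Icc a b = Icc a ((b - a) * t + a) := by
    ext y
    simp only [mem_inter_iff, mem_Iic, mem_Icc]
    exact ⟨fun h => ⟨h.2.1, h.1⟩, fun h => ⟨h.2, h.1, h.2.trans hx⟩⟩
  rw [unif_apply, this, Real.volume_Icc, add_sub_cancel_right,
    ENNReal.ofReal_inv_mul_ofReal_mul (sub_pos.2 hab)]

theorem unif_Ici_affine {a b t : ℝ} (hab : a < b) (ht : t ∈ Icc (0 : ℝ) 1) :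
    unif a b (Ici ((b - a) * t + a)) = ENNReal.ofReal (1 - t) := by
  have hx : a ≤ (b - a) * t + a := by nlinarith [ht.1]
  have : Ici ((b - a) * t + a) ∩ Icc a b = Icc ((b - a) * t + a) b := by
    ext y
    simp only [mem_inter_iff, mem_Ici, mem_Icc]
    exact ⟨fun h => ⟨h.1, h.2.2⟩, fun h => ⟨h.1, hx.trans h.1, h.2⟩⟩
  rw [unif_apply, this, Real.volume_Icc, show b - ((b - a) * t + a) = (b - a) * (1 - t) by ring,
    ENNReal.ofReal_inv_mul_ofReal_mul (sub_pos.2 hab)]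

theorem lintegral_unif {a b : ℝ} (hab : a < b) (F : ℝ → ℝ≥0∞) :
    ∫⁻ x, F x ∂unif a b = ∫⁻ t in Ioo 0 1, F ((b - a) * t + a) := by
  have hba : 0 < b - a := sub_pos.2 hab
  have himage : (fun t => (b - a) * t + a) '' Ioo 0 1 = Ioo a b := by
    rw [image_affine_Ioo hba]; congr 1 <;> ring
  rw [unif, lintegral_smul_measure, ← Measure.restrict_congr_set Ioo_ae_eq_Icc, ← himage,
    lintegral_image_eq_lintegral_abs_deriv_mul (f' := fun _ => b - a) measurableSet_Ioo
      (fun t _ => by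
        simpa using ((hasDerivAt_id t).const_mul (b - a)).add_const a |>.hasDerivWithinAt)
      (fun s _ t _ h => by simpa [hba.ne'] using h),
    lintegral_const_mul' _ _ ENNReal.ofReal_ne_top, smul_eq_mul, ← mul_assoc, abs_of_pos hba,
    ENNReal.inv_mul_cancel (ENNReal.ofReal_pos.2 hba).ne' ENNReal.ofReal_ne_top, one_mul]

theorem lintegral_unif_eq_ofReal_integral {a b : ℝ} (hab : a < b) {F : ℝ → ℝ≥0∞}
    {G : ℝ → ℝ} (hG : IntervalIntegrable G volume 0 1) (hG0 : ∀ t ∈ Ioo (0 : ℝ) 1, 0 ≤ G t)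
    (hF : ∀ t ∈ Ioo (0 : ℝ) 1, F ((b - a) * t + a) = ENNReal.ofReal (G t)) :
    ∫⁻ x, F x ∂unif a b = ENNReal.ofReal (∫ t in (0 : ℝ)..1, G t) := by
  rw [lintegral_unif hab, setLIntegral_congr_fun measurableSet_Ioo hF,
    intervalIntegral.integral_of_le zero_le_one, integral_Ioc_eq_integral_Ioo,
    ofReal_integral_eq_lintegral_ofReal (hG.1.mono_set Ioo_subset_Ioc_self)
      ((ae_restrict_iff' measurableSet_Ioo).2 (ae_of_all _ hG0))]

theorem intervalIntegrable_min_div_div {p q : ℝ} (hp : 0 ≤ p) (hq : 0 ≤ q) :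
    IntervalIntegrable (fun t => min (p / t) (q / (1 - t))) volume 0 1 := by
  refine (intervalIntegrable_const (c := 2 * (p + q))).mono_fun' (by fun_prop)
    ((ae_restrict_iff' measurableSet_uIoc).2 (ae_of_all _ fun t ht => ?_))
  rw [uIoc_of_le zero_le_one] at ht
  dsimp only
  rw [Real.norm_of_nonneg (le_min (div_nonneg hp ht.1.le) (div_nonneg hq (sub_nonneg.2 ht.2)))]
  rcases le_total t (1 / 2) with h | h
  · refine (min_le_right _ _).trans ((div_le_iff₀ (by linarith)).2 ?_)
    nlinarith
  · refine (min_le_left _ _).trans ((div_le_iff₀ (by linarith)).2 ?_)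
    nlinarith

theorem integral_const_div_of_pos (p : ℝ) {c : ℝ} (hc : 0 < c) :
    ∫ t in c..1, p / t = -(p * Real.log c) := by
  simp_rw [div_eq_mul_inv]
  rw [intervalIntegral.integral_const_mul, integral_inv_of_pos hc one_pos, one_div, Real.log_inv,
    mul_neg]

theorem integral_min_div_div {m s : ℝ} (hm : 0 ≤ m) (hs : s ∈ Icc (0 : ℝ) 1) :
    ∫ t in (0 : ℝ)..1, min (m * s / t) (m * (1 - s) / (1 - t)) =
      -(m * Real.log ((1 - s) ^ (1 - s) * s ^ s)) := by
  -- `0 ^ 0 = 1` for `Real.rpow`, so the right-hand side vanishes at `s = 0` and `s = 1`.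
  rcases hs.1.eq_or_lt with rfl | hs0
  · rw [intervalIntegral.integral_congr_Ioo_of_le zero_le_one (g := 0) fun t ht => ?_]
    · simp
    · simp [div_nonneg hm (sub_nonneg.2 ht.2.le)]
  rcases hs.2.eq_or_lt with rfl | hs1
  · rw [intervalIntegral.integral_congr_Ioo_of_le zero_le_one (g := 0) fun t ht => ?_]
    · simp
    · simp [div_nonneg hm ht.1.le]
  have hG :=
    intervalIntegrable_min_div_div (mul_nonneg hm hs0.le) (mul_nonneg hm (sub_pos.2 hs1).le)
  have hleft : EqOn (fun t => min (m * s / t) (m * (1 - s) / (1 - t)))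
      (fun t => m * (1 - s) / (1 - t)) (Ioo 0 s) := fun t ht => by
    refine min_eq_right ((div_le_div_iff₀ (by linarith [ht.2]) ht.1).2 ?_)
    nlinarith [mul_nonneg hm (sub_nonneg.2 ht.2.le)]
  have hright : EqOn (fun t => min (m * s / t) (m * (1 - s) / (1 - t))) (fun t => m * s / t)
      (Ioo s 1) := fun t ht => by
    refine min_eq_left ((div_le_div_iff₀ (by linarith [ht.1]) (by linarith [ht.2])).2 ?_)
    nlinarith [mul_nonneg hm (sub_nonneg.2 ht.1.le)]
  rw [← intervalIntegral.integral_add_adjacent_intervals (b := s)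
      (hG.mono_set (by simp [uIcc_of_le, hs0.le, hs1.le, Icc_subset_Icc]))
      (hG.mono_set (by simp [uIcc_of_le, hs0.le, hs1.le, Icc_subset_Icc])),
    intervalIntegral.integral_congr_Ioo_of_le hs0.le hleft,
    intervalIntegral.integral_congr_Ioo_of_le hs1.le hright,
    intervalIntegral.integral_comp_sub_left (fun t => m * (1 - s) / t), sub_zero,
    integral_const_div_of_pos _ (sub_pos.2 hs1), integral_const_div_of_pos _ hs0,
    Real.log_mul (Real.rpow_pos_of_pos (sub_pos.2 hs1) _).ne'
      (Real.rpow_pos_of_pos hs0 _).ne',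
    Real.log_rpow (sub_pos.2 hs1), Real.log_rpow hs0]
  ring

theorem pointDepth1_eq_ofReal_min {Q μ : Measure ℝ} {x r s u v : ℝ}
    (hQl : Q (Iic x) = ENNReal.ofReal r) (hQr : Q (Ici x) = ENNReal.ofReal s)
    (hμl : μ (Iic x) = ENNReal.ofReal u) (hμr : μ (Ici x) = ENNReal.ofReal v)
    (hu : 0 < u) (hv : 0 < v) :
    pointDepth1 Q μ x = ENNReal.ofReal (min (r / u) (s / v)) := by
  rw [pointDepth1, hQl, hQr, hμl, hμr, ← ENNReal.ofReal_div_of_pos hu,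
    ← ENNReal.ofReal_div_of_pos hv, ENNReal.ofReal_min]

section Segments

variable {n k : ℕ} {a b : ℕ → ℝ}

theorem right_end_lt_left_end_of_lt (hab : ∀ i, 1 ≤ i → i ≤ n → a i < b i)
    (hord : ∀ i, 1 ≤ i → i < n → b i < a (i + 1)) {i j : ℕ} (hi : 1 ≤ i) (hij : i < j)
    (hjn : j ≤ n) : b i < a j := by
  induction j, hij using Nat.le_induction with
  | base => exact hord i hi (by omega)
  | succ j hij ih =>
    exact (ih (by omega)).trans
      ((hab j (by omega) (by omega)).trans (hord j (by omega) (by omega)))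

theorem sum_unif_Iic (hab : ∀ i, 1 ≤ i → i ≤ n → a i < b i)
    (hsep : ∀ i j, 1 ≤ i → i < j → j ≤ n → b i < a j) (hk1 : 1 ≤ k) (hkn : k ≤ n) {x : ℝ}
    (hx : x ∈ Icc (a k) (b k)) :
    ∑ i ∈ Finset.Icc 1 n, unif (a i) (b i) (Iic x) =
      (k - 1 : ℕ) + unif (a k) (b k) (Iic x) := by
  have hleft : ∀ i ∈ Finset.Ico 1 k, unif (a i) (b i) (Iic x) = 1 := by
    intro i hi
    rw [Finset.mem_Ico] at hi
    exact unif_eq_one_of_Icc_subset (hab i hi.1 (by omega))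
      fun y hy => hy.2.trans ((hsep i k hi.1 hi.2 hkn).le.trans hx.1)
  have hright : ∀ i ∈ Finset.Ioc k n, unif (a i) (b i) (Iic x) = 0 := by
    intro i hi
    rw [Finset.mem_Ioc] at hi
    exact unif_eq_zero_of_disjoint <| disjoint_left.2 fun y hy hy' =>
      (hy.trans hx.2).not_gt ((hsep k i hk1 hi.1 hi.2).trans_le hy'.1)
  rw [Finset.sum_Icc_eq_sum_Ico_add_add_sum_Ioc _ hk1 hkn, Finset.sum_congr rfl hleft,
    Finset.sum_eq_zero hright, Finset.sum_const, Nat.card_Ico, nsmul_one, add_zero]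

theorem sum_unif_Ici (hab : ∀ i, 1 ≤ i → i ≤ n → a i < b i)
    (hsep : ∀ i j, 1 ≤ i → i < j → j ≤ n → b i < a j) (hk1 : 1 ≤ k) (hkn : k ≤ n) {x : ℝ}
    (hx : x ∈ Icc (a k) (b k)) :
    ∑ i ∈ Finset.Icc 1 n, unif (a i) (b i) (Ici x) =
      (n - k : ℕ) + unif (a k) (b k) (Ici x) := by
  have hleft : ∀ i ∈ Finset.Ico 1 k, unif (a i) (b i) (Ici x) = 0 := by
    intro i hi
    rw [Finset.mem_Ico] at hi
    exact unif_eq_zero_of_disjoint <| disjoint_left.2 fun y hy hy' =>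
      (hx.1.trans hy).not_gt (hy'.2.trans_lt (hsep i k hi.1 hi.2 hkn))
  have hright : ∀ i ∈ Finset.Ioc k n, unif (a i) (b i) (Ici x) = 1 := by
    intro i hi
    rw [Finset.mem_Ioc] at hi
    exact unif_eq_one_of_Icc_subset (hab i (by omega) hi.2)
      fun y hy => hx.2.trans ((hsep k i hk1 hi.1 hi.2).le.trans hy.1)
  rw [Finset.sum_Icc_eq_sum_Ico_add_add_sum_Ioc _ hk1 hkn, Finset.sum_eq_zero hleft,
    Finset.sum_congr rfl hright, Finset.sum_const, Nat.card_Ioc, nsmul_one, zero_add, add_comm]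

theorem pointDepth1_segment (hab : ∀ i, 1 ≤ i → i ≤ n → a i < b i)
    (hsep : ∀ i j, 1 ≤ i → i < j → j ≤ n → b i < a j) (hk1 : 1 ≤ k) (hkn : k ≤ n) {t : ℝ}
    (ht : t ∈ Ioo (0 : ℝ) 1) :
    pointDepth1 ((n : ℝ≥0∞)⁻¹ • ∑ i ∈ Finset.Icc 1 n, unif (a i) (b i)) (unif (a k) (b k))
        ((b k - a k) * t + a k) =
      ENNReal.ofReal ((1 + min (((k : ℝ) - 1) / t) (((n : ℝ) - k) / (1 - t))) / n) := by
  have hak : a k < b k := hab k hk1 hkn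
  have hn : (0 : ℝ) < n := by exact_mod_cast hk1.trans hkn
  have hx : (b k - a k) * t + a k ∈ Icc (a k) (b k) := by
    constructor <;> nlinarith [ht.1, ht.2]
  have hμl := unif_Iic_affine hak (Ioo_subset_Icc_self ht)
  have hμr := unif_Ici_affine hak (Ioo_subset_Icc_self ht)
  have hQ : ∀ (m : ℕ) (u : ℝ), 0 ≤ u →
      (n : ℝ≥0∞)⁻¹ * ((m : ℝ≥0∞) + ENNReal.ofReal u) = ENNReal.ofReal ((m + u) / n) := by
    intro m u hu
    rw [← ENNReal.ofReal_natCast m, ← ENNReal.ofReal_add m.cast_nonneg hu, div_eq_inv_mul,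
      ENNReal.ofReal_mul (inv_nonneg.2 hn.le), ENNReal.ofReal_inv_of_pos hn,
      ENNReal.ofReal_natCast]
  have hratio : ∀ p u : ℝ, 0 < u → (p + u) / n / u = (1 + p / u) / n := by
    intro p u hu
    field_simp
    ring
  rw [pointDepth1_eq_ofReal_min (r := (((k - 1 : ℕ) : ℝ) + t) / n)
      (s := (((n - k : ℕ) : ℝ) + (1 - t)) / n) _ _ hμl hμr ht.1 (sub_pos.2 ht.2),
    hratio _ _ ht.1, hratio _ _ (sub_pos.2 ht.2),
    min_div_div_right hn.le, min_add_add_left, Nat.cast_sub hk1, Nat.cast_sub hkn, Nat.cast_one]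
  · rw [Measure.smul_apply, Measure.finsetSum_apply, sum_unif_Iic hab hsep hk1 hkn hx, hμl,
      smul_eq_mul, hQ _ _ ht.1.le]
  · rw [Measure.smul_apply, Measure.finsetSum_apply, sum_unif_Ici hab hsep hk1 hkn hx, hμr,
      smul_eq_mul, hQ _ _ (sub_pos.2 ht.2).le]

theorem lintegral_pointDepth1_segment (hab : ∀ i, 1 ≤ i → i ≤ n → a i < b i)
    (hsep : ∀ i j, 1 ≤ i → i < j → j ≤ n → b i < a j) (hk1 : 1 ≤ k) (hkn : k ≤ n) :
    ∫⁻ x, pointDepth1 ((n : ℝ≥0∞)⁻¹ • ∑ i ∈ Finset.Icc 1 n, unif (a i) (b i))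
        (unif (a k) (b k)) x ∂(unif (a k) (b k)) =
      ENNReal.ofReal
        ((1 + ∫ t in (0 : ℝ)..1, min (((k : ℝ) - 1) / t) (((n : ℝ) - k) / (1 - t))) / n) := by
  have hp : (0 : ℝ) ≤ k - 1 := sub_nonneg.2 (by exact_mod_cast hk1)
  have hq : (0 : ℝ) ≤ n - k := sub_nonneg.2 (by exact_mod_cast hkn)
  have hmin := intervalIntegrable_min_div_div hp hq
  rw [lintegral_unif_eq_ofReal_integral (hab k hk1 hkn)
      ((intervalIntegrable_const (c := (1 : ℝ))).add hmin |>.div_const (n : ℝ))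
      (fun t ht => div_nonneg (add_nonneg zero_le_one
        (le_min (div_nonneg hp ht.1.le) (div_nonneg hq (sub_pos.2 ht.2).le))) n.cast_nonneg)
      (fun t ht => pointDepth1_segment hab hsep hk1 hkn ht),
    intervalIntegral.integral_div, intervalIntegral.integral_add intervalIntegrable_const hmin,
    intervalIntegral.integral_const, sub_zero, one_smul]

end Segments

/-- Segments-on-a-line example of Section 5.1 of the paper: for `n ≥ 2` pairwise
disjoint ordered segments `[a k, b k]`, `k = 1, …, n`, on the real line, the curve
depth of the `k`-th segment with respect to `Q_n = (1/n) Σ μ_i` equals `1/n` for the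
extreme segments, and `1/n − ((n−1)/n)·log((1−t_k)^{1−t_k}·t_k^{t_k})` with
`t_k = (k−1)/(n−1)` otherwise.  In particular it depends only on `n` and `k`. -/
theorem segments_on_line_depth
    (n : ℕ) (hn : 2 ≤ n) (a b : ℕ → ℝ)
    (hab : ∀ k, 1 ≤ k → k ≤ n → a k < b k)
    (hord : ∀ k, 1 ≤ k → k < n → b k < a (k + 1)) :
    ∀ k, 1 ≤ k → k ≤ n →
      ∫⁻ x, pointDepth1 ((n : ℝ≥0∞)⁻¹ • ∑ i ∈ Finset.Icc 1 n, unif (a i) (b i))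
          (unif (a k) (b k)) x ∂(unif (a k) (b k)) =
        if k = 1 ∨ k = n then (n : ℝ≥0∞)⁻¹
        else ENNReal.ofReal
          (1 / n - ((n - 1 : ℝ) / n) *
            Real.log ((1 - ((k : ℝ) - 1) / ((n : ℝ) - 1)) ^ (1 - ((k : ℝ) - 1) / ((n : ℝ) - 1)) *
              (((k : ℝ) - 1) / ((n : ℝ) - 1)) ^ (((k : ℝ) - 1) / ((n : ℝ) - 1)))) := by
  intro k hk1 hkn
  rw [lintegral_pointDepth1_segment hab
    (fun i j hi hij hjn => right_end_lt_left_end_of_lt hab hord hi hij hjn) hk1 hkn]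
  have hm : (0 : ℝ) < n - 1 := by
    have : (2 : ℝ) ≤ n := by exact_mod_cast hn
    linarith
  have hk : (1 : ℝ) ≤ k ∧ (k : ℝ) ≤ n := ⟨by exact_mod_cast hk1, by exact_mod_cast hkn⟩
  set s := ((k : ℝ) - 1) / ((n : ℝ) - 1) with hs_def
  have hs : s ∈ Icc (0 : ℝ) 1 :=
    ⟨div_nonneg (by linarith) hm.le, (div_le_one hm).2 (by linarith)⟩
  have hleft : (k : ℝ) - 1 = (n - 1) * s := by rw [hs_def]; field_simp
  have hright : (n : ℝ) - k = (n - 1) * (1 - s) := by rw [hs_def]; field_simp; ring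
  rw [hleft, hright, integral_min_div_div hm.le hs]
  split_ifs with hend
  · have hs01 : s = 0 ∨ s = 1 := by rcases hend with rfl | rfl <;> simp [hs_def, hm.ne']
    rw [← ENNReal.ofReal_natCast, ← ENNReal.ofReal_inv_of_pos (by linarith)]
    rcases hs01 with h | h <;> simp [h]
  · congr 1
    ring
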